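/- Let w > 0, let k ∈ ℕ with k ≥ 1, and let C be a chain all of whose weights are equal to w. If C has 2k edges (i.e. 2k+1 vertices) then its noncommutative length is λ(C) = w·sqrt(k(k+1)); if C has 2k−1 edges (i.e. 2k vertices) then λ(C) = w·k. -/

import Mathlib

open scoped ENNReal

/-- The operator norm on square matrices induced by the Euclidean (ℓ²) norm. -/
noncomputable def opNorm {ι : Type*} [Finite ι] (M : Matrix ι ι ℂ) : ℝ :=
  letI := Fintype.ofFinite ι
  letI := Classical.decEq ι
  ‖Matrix.toEuclideanCLM (𝕜 := ℂ) M‖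

/-- The commutator `[D, π(a)]` of a matrix with the diagonal matrix of `a`. -/
noncomputable def commD {ι : Type*} [Finite ι] (D : Matrix ι ι ℂ) (a : ι → ℂ) : Matrix ι ι ℂ :=
  letI := Fintype.ofFinite ι
  letI := Classical.decEq ι
  D * Matrix.diagonal a - Matrix.diagonal a * D

/-- Connes' noncommutative distance associated to the Dirac operator `D`. -/
noncomputable def ncDist {ι : Type*} [Finite ι] (D : Matrix ι ι ℂ) (i j : ι) : ℝ≥0∞ :=
  ⨆ (a : ι → ℂ) (_ : opNorm (commD D a) ≤ 1), ENNReal.ofReal ‖a i - a j‖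

/-- The weight of an edge: the inverse of `|D i j|` (infinite if `D i j = 0`). -/
noncomputable def eWeight {ι : Type*} (D : Matrix ι ι ℂ) (u v : ι) : ℝ≥0∞ :=
  (ENNReal.ofReal ‖D u v‖)⁻¹

/-- Adjacency in the graph `G_D`. -/
def Adjac {ι : Type*} (D : Matrix ι ι ℂ) (u v : ι) : Prop := u ≠ v ∧ D u v ≠ 0

/-- The length of a walk `i :: p` computed with weights `eWeight D`. -/
noncomputable def walkLength {ι : Type*} (D : Matrix ι ι ℂ) : ι → List ι → ℝ≥0∞
  | _, [] => 0
  | u, v :: rest => eWeight D u v + walkLength D v rest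

/-- `i :: p` is a walk from `i` to `j` in the graph `G_D`. -/
def IsWalk {ι : Type*} (D : Matrix ι ι ℂ) (i j : ι) (p : List ι) : Prop :=
  List.Chain (Adjac D) i p ∧ (i :: p).getLast (List.cons_ne_nil _ _) = j

/-- `i` and `j` lie in the same connected component of `G_D`. -/
def Conn {ι : Type*} (D : Matrix ι ι ℂ) (i j : ι) : Prop := ∃ p, IsWalk D i j p

/-- The geodesic (weighted shortest-path) distance on `G_D`. -/
noncomputable def gDist {ι : Type*} (D : Matrix ι ι ℂ) (i j : ι) : ℝ≥0∞ :=
  ⨅ (p : List ι) (_ : IsWalk D i j p), walkLength D i p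


/-- The Dirac operator of the chain (weighted path graph) on `n` vertices with
weights `w 0, …, w (n-2)`. -/
noncomputable def chainD (n : ℕ) (w : ℕ → ℝ) : Matrix (Fin n) (Fin n) ℂ :=
  Matrix.of fun i j =>
    if (i : ℕ) + 1 = (j : ℕ) then (((w (i : ℕ))⁻¹ : ℝ) : ℂ)
    else if (j : ℕ) + 1 = (i : ℕ) then (((w (j : ℕ))⁻¹ : ℝ) : ℂ)
    else 0


/-!
Upper bound: `|⟨y, [D, π(a)] x⟩| ≤ ‖[D, π(a)]‖ ‖x‖ ‖y‖`, and on a chain of constant weight `w`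
the pairing equals `w⁻¹ ∑ᵢ (aᵢ₊₁ - aᵢ) (ȳᵢ xᵢ₊₁ - ȳᵢ₊₁ xᵢ)`. For `xₗ = cos (π l / 2)` and
`yₗ = xₗ₊₁` every bracket is `1`, so the sum telescopes to `w⁻¹ (a_last - a_first)`, while
`‖x‖² = ⌈n / 2⌉` and `‖y‖² = ⌊n / 2⌋` for `n` vertices.

Lower bound: Schur's test bounds `‖M‖²` by `maxⱼ ∑ᵢ |Mᵢⱼ| ∑ₗ |Mᵢₗ|`, which for `M = [D, π(w f)]`
only involves the jumps of `f` next to vertex `j`. With jumps `1, 0, 1, 0, …, 1` (`2k` vertices)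
every column gives `1`; with jumps `k, 1, k - 1, 2, …, 1, k` (`2k + 1` vertices) every column
gives `k (k + 1)`. The total rise of `f` is `k`, resp. `k (k + 1)`.
-/

open Finset Matrix

section General

variable {ι : Type*} [Fintype ι]

lemma opNorm_eq [DecidableEq ι] (M : Matrix ι ι ℂ) :
    opNorm M = ‖toEuclideanCLM (𝕜 := ℂ) M‖ := by
  unfold opNorm; congr!

lemma commD_apply (D : Matrix ι ι ℂ) (a : ι → ℂ) (i j : ι) :
    commD D a i j = D i j * (a j - a i) := by
  simp [commD, mul_sub, mul_comm]

lemma commD_smul (D : Matrix ι ι ℂ) (c : ℂ) (a : ι → ℂ) :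
    commD D (c • a) = c • commD D a := by
  ext i j
  simp only [Matrix.smul_apply, commD_apply, Pi.smul_apply, smul_eq_mul]
  ring

lemma opNorm_smul (c : ℂ) (M : Matrix ι ι ℂ) : opNorm (c • M) = ‖c‖ * opNorm M := by
  classical
  simp [opNorm_eq, norm_smul]

lemma norm_star_dotProduct_mulVec_le [DecidableEq ι] (M : Matrix ι ι ℂ) (x y : ι → ℂ) :
    ‖star y ⬝ᵥ M *ᵥ x‖ ≤ opNorm M * ‖WithLp.toLp 2 y‖ * ‖WithLp.toLp 2 x‖ := by
  have : star y ⬝ᵥ M *ᵥ x =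
      inner ℂ (WithLp.toLp 2 y) (toEuclideanCLM (𝕜 := ℂ) M (WithLp.toLp 2 x)) := by
    rw [toEuclideanCLM_toLp, EuclideanSpace.inner_toLp_toLp, dotProduct_comm]
  rw [this, opNorm_eq]
  calc _ ≤ ‖WithLp.toLp 2 y‖ * ‖toEuclideanCLM (𝕜 := ℂ) M (WithLp.toLp 2 x)‖ :=
        norm_inner_le_norm _ _
    _ ≤ ‖WithLp.toLp 2 y‖ * (‖toEuclideanCLM (𝕜 := ℂ) M‖ * ‖WithLp.toLp 2 x‖) := by
        gcongr; exact ContinuousLinearMap.le_opNorm _ _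
    _ = _ := by ring

/-- Schur's test, with the row sums of `|M|` as test weights. -/
lemma opNorm_le_of_sum_norm_mul_rowSum_le [DecidableEq ι] (M : Matrix ι ι ℂ) {C : ℝ}
    (hC : 0 ≤ C) (h : ∀ j, ∑ i, ‖M i j‖ * ∑ l, ‖M i l‖ ≤ C ^ 2) : opNorm M ≤ C := by
  rw [opNorm_eq]
  refine ContinuousLinearMap.opNorm_le_bound _ hC fun v => ?_
  obtain ⟨x, rfl⟩ : ∃ x : ι → ℂ, WithLp.toLp 2 x = v := ⟨WithLp.ofLp v, rfl⟩
  rw [toEuclideanCLM_toLp, EuclideanSpace.norm_eq, EuclideanSpace.norm_eq,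
    ← Real.sqrt_sq hC, ← Real.sqrt_mul (by positivity)]
  refine Real.sqrt_le_sqrt ?_
  have row (i : ι) : ‖(M *ᵥ x) i‖ ^ 2 ≤ (∑ l, ‖M i l‖) * ∑ j, ‖M i j‖ * ‖x j‖ ^ 2 :=
    calc ‖(M *ᵥ x) i‖ ^ 2 ≤ (∑ j, ‖M i j‖ * ‖x j‖) ^ 2 := by
          gcongr
          exact (norm_sum_le _ _).trans_eq (by simp)
      _ ≤ _ := sum_sq_le_sum_mul_sum_of_sq_le_mul _ (fun _ _ => norm_nonneg _)
          (fun _ _ => by positivity) (fun _ _ => le_of_eq (by ring))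
  calc ∑ i, ‖(M *ᵥ x) i‖ ^ 2
      ≤ ∑ i, (∑ l, ‖M i l‖) * ∑ j, ‖M i j‖ * ‖x j‖ ^ 2 := sum_le_sum fun i _ => row i
    _ = ∑ j, (∑ i, ‖M i j‖ * ∑ l, ‖M i l‖) * ‖x j‖ ^ 2 := by
        simp only [mul_sum, sum_mul]
        rw [sum_comm]
        exact sum_congr rfl fun _ _ => sum_congr rfl fun _ _ => sum_congr rfl fun _ _ => by ring
    _ ≤ ∑ j, C ^ 2 * ‖x j‖ ^ 2 := by gcongr with j; exact h j
    _ = C ^ 2 * ∑ j, ‖WithLp.toLp 2 x j‖ ^ 2 := by rw [mul_sum]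

lemma ofReal_div_le_ncDist (D : Matrix ι ι ℂ) (a : ι → ℂ) {C : ℝ}
    (hC : 0 < C) (ha : opNorm (commD D a) ≤ C) (i j : ι) :
    ENNReal.ofReal (‖a i - a j‖ / C) ≤ ncDist D i j := by
  refine le_iSup₂_of_le (((C⁻¹ : ℝ) : ℂ) • a) ?_ (le_of_eq ?_)
  · rw [commD_smul, opNorm_smul, Complex.norm_real, Real.norm_of_nonneg (by positivity)]
    exact inv_mul_le_one_of_le₀ ha hC.le
  · simp [← mul_sub, div_eq_inv_mul, abs_of_pos hC]

end General

section Chain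

variable {n : ℕ} {w : ℝ}

lemma chainD_const_apply (i j : Fin n) :
    chainD n (fun _ => w) i j =
      if (i : ℕ) + 1 = j ∨ (j : ℕ) + 1 = i then ((w⁻¹ : ℝ) : ℂ) else 0 := by
  simp only [chainD, of_apply]
  split_ifs <;> tauto

lemma sum_fin_ite_adj {M : Type*} [AddCommMonoid M] (j : Fin n) (g : ℕ → M) :
    ∑ i : Fin n, (if (i : ℕ) + 1 = j ∨ (j : ℕ) + 1 = i then g i else 0) =
      (if 0 < (j : ℕ) then g (j - 1) else 0) + (if (j : ℕ) + 1 < n then g (j + 1) else 0) := by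
  rw [Fin.sum_univ_eq_sum_range (fun i => if i + 1 = j ∨ (j : ℕ) + 1 = i then g i else 0)]
  have hj := j.isLt
  calc _ = ∑ i ∈ range n,
          ((if i + 1 = j then g i else 0) + (if (j : ℕ) + 1 = i then g i else 0)) :=
        sum_congr rfl fun i _ => by split_ifs <;> first | omega | simp
    _ = _ := by
        rw [sum_add_distrib, sum_ite_eq, if_congr mem_range rfl rfl]
        congr 1
        rcases h : (j : ℕ) with _ | m
        · simp
        · simp [sum_ite_eq', show m < n by omega]

lemma commD_chainD_mulVec_apply (a x : ℕ → ℂ) (i : Fin n) :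
    (commD (chainD n fun _ => w) (fun j : Fin n => a j) *ᵥ fun j : Fin n => x j) i =
      ((w⁻¹ : ℝ) : ℂ) * ((if 0 < (i : ℕ) then (a (i - 1) - a i) * x (i - 1) else 0) +
        (if (i : ℕ) + 1 < n then (a (i + 1) - a i) * x (i + 1) else 0)) := by
  simp only [mulVec, dotProduct, commD_apply, chainD_const_apply, ite_mul, zero_mul]
  simp_rw [or_comm (a := (i : ℕ) + 1 = _)]
  rw [sum_fin_ite_adj i (fun l => ((w⁻¹ : ℝ) : ℂ) * (a l - a i) * x l)]
  split_ifs <;> ring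

lemma star_dotProduct_commD_chainD_mulVec (a x y : ℕ → ℂ) :
    star (fun i : Fin n => y i) ⬝ᵥ
        (commD (chainD n fun _ => w) (fun j : Fin n => a j) *ᵥ fun j : Fin n => x j) =
      ((w⁻¹ : ℝ) : ℂ) * ∑ i ∈ range (n - 1),
        (a (i + 1) - a i) * (star (y i) * x (i + 1) - star (y (i + 1)) * x i) := by
  simp only [dotProduct, Pi.star_apply, commD_chainD_mulVec_apply]
  rw [Fin.sum_univ_eq_sum_range (fun i => star (y i) * (((w⁻¹ : ℝ) : ℂ) *
    ((if 0 < i then (a (i - 1) - a i) * x (i - 1) else 0) +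
      (if i + 1 < n then (a (i + 1) - a i) * x (i + 1) else 0))))]
  rcases n with _ | m
  · simp
  · simp only [mul_add, sum_add_distrib]
    conv_lhs => arg 1; rw [sum_range_succ']
    conv_lhs => arg 2; rw [sum_range_succ]
    simp only [Nat.add_sub_cancel, lt_self_iff_false, if_false, mul_zero, add_zero,
      Nat.succ_pos, if_true, mul_sum, ← sum_add_distrib]
    refine sum_congr rfl fun i hi => ?_
    rw [if_pos (by simpa using hi)]
    ring

end Chain

-- `cos (π l / 2)`
noncomputable def altSign (l : ℕ) : ℂ := if Even l then (-1) ^ (l / 2) else 0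

lemma star_altSign (l : ℕ) : star (altSign l) = altSign l := by
  unfold altSign; split_ifs <;> simp

lemma norm_altSign_sq (l : ℕ) : ‖altSign l‖ ^ 2 = if Even l then 1 else 0 := by
  unfold altSign; split_ifs <;> simp

-- `cos² + sin² = 1`
lemma altSign_succ_mul_self_sub (l : ℕ) :
    star (altSign (l + 1)) * altSign (l + 1) - star (altSign (l + 1 + 1)) * altSign l = 1 := by
  have h1 (m : ℕ) : ¬Even (2 * m + 1) := by simp [parity_simps]
  simp only [star_altSign]
  rcases Nat.even_or_odd' l with ⟨m, rfl | rfl⟩ <;>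
    simp [altSign, h1, parity_simps, show (2 * m + 1 + 1) / 2 = m + 1 by omega, pow_succ,
      ← mul_pow]

lemma sum_range_ite_even (n : ℕ) :
    ∑ l ∈ range n, (if Even l then (1 : ℝ) else 0) = ((n + 1) / 2 : ℕ) := by
  induction n with
  | zero => simp
  | succ n ih =>
    have : (n + 1 + 1) / 2 = (n + 1) / 2 + if Even n then 1 else 0 := by
      split_ifs with h <;> simp only [Nat.even_iff] at h <;> omega
    rw [sum_range_succ, ih, this]
    split_ifs <;> simp

lemma norm_toLp_fin (n : ℕ) (x : ℕ → ℂ) :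
    ‖WithLp.toLp 2 (fun l : Fin n => x l)‖ = √(∑ l ∈ range n, ‖x l‖ ^ 2) := by
  rw [EuclideanSpace.norm_eq, Fin.sum_univ_eq_sum_range (fun l => ‖x l‖ ^ 2)]

lemma norm_toLp_altSign (n : ℕ) :
    ‖WithLp.toLp 2 (fun l : Fin n => altSign l)‖ = √((n + 1) / 2 : ℕ) := by
  simp only [norm_toLp_fin, norm_altSign_sq, sum_range_ite_even]

lemma norm_toLp_altSign_succ (n : ℕ) :
    ‖WithLp.toLp 2 (fun l : Fin n => altSign (l + 1))‖ = √(n / 2 : ℕ) := by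
  have h := sum_range_ite_even (n + 1)
  rw [sum_range_succ'] at h
  rw [norm_toLp_fin n (fun l => altSign (l + 1))]
  simp only [norm_altSign_sq]
  congr 1
  push_cast [show (n + 1 + 1) / 2 = n / 2 + 1 by omega] at h
  simpa using h

lemma ncDist_chainD_le {n : ℕ} {w : ℝ} (hw : 0 < w) (i j : Fin n) (hi : (i : ℕ) = 0)
    (hj : (j : ℕ) + 1 = n) :
    ncDist (chainD n fun _ => w) i j ≤
      ENNReal.ofReal (w * √(((n / 2 : ℕ) : ℝ) * ((n + 1) / 2 : ℕ))) := by
  refine iSup₂_le fun a ha => ENNReal.ofReal_le_ofReal ?_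
  obtain ⟨A, rfl⟩ : ∃ A : ℕ → ℂ, a = fun l : Fin n => A l :=
    ⟨fun l => if h : l < n then a ⟨l, h⟩ else 0, by ext l; simp⟩
  have hpair := star_dotProduct_commD_chainD_mulVec (n := n) (w := w) A altSign
    (fun l => altSign (l + 1))
  simp only [altSign_succ_mul_self_sub, mul_one, sum_range_sub A] at hpair
  have hbound := norm_star_dotProduct_mulVec_le
    (commD (chainD n fun _ => w) fun l : Fin n => A l)
    (fun l : Fin n => altSign l) (fun l : Fin n => altSign (l + 1))
  rw [hpair, norm_toLp_altSign, norm_toLp_altSign_succ, norm_mul, Complex.norm_real,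
    Real.norm_of_nonneg (by positivity), mul_assoc, ← Real.sqrt_mul (by positivity)] at hbound
  rw [show n - 1 = j by omega, inv_mul_le_iff₀ hw] at hbound
  simp only [hi, norm_sub_rev]
  exact hbound.trans (mul_le_mul_of_nonneg_left (mul_le_of_le_one_left (by positivity) ha) hw.le)

-- the length of the edge ending at vertex `j`; note `edgeLen f 0 = 0`, as `0 - 1 = 0` in `ℕ`
noncomputable def edgeLen (f : ℕ → ℝ) (j : ℕ) : ℝ := |f j - f (j - 1)|

lemma edgeLen_nonneg (f : ℕ → ℝ) (j : ℕ) : 0 ≤ edgeLen f j := abs_nonneg _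

lemma opNorm_commD_chainD_le {n : ℕ} {w : ℝ} (hw : 0 < w) (f : ℕ → ℝ) {C : ℝ} (hC : 0 ≤ C)
    (h : ∀ j < n, edgeLen f j * (edgeLen f (j - 1) + edgeLen f j) +
      edgeLen f (j + 1) * (edgeLen f (j + 1) + edgeLen f (j + 2)) ≤ C ^ 2) :
    opNorm (commD (chainD n fun _ => w) fun j : Fin n => ((w * f j : ℝ) : ℂ)) ≤ C := by
  set M := commD (chainD n fun _ => w) fun j : Fin n => ((w * f j : ℝ) : ℂ)
  have hM (i l : Fin n) :
      ‖M i l‖ = if (i : ℕ) + 1 = l ∨ (l : ℕ) + 1 = i then |f l - f i| else 0 := by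
    simp only [M, commD_apply, chainD_const_apply]
    split_ifs
    · rw [← Complex.ofReal_sub, ← Complex.ofReal_mul, Complex.norm_real, ← mul_sub,
        inv_mul_cancel_left₀ hw.ne', Real.norm_eq_abs]
    · simp
  set R : ℕ → ℝ := fun i =>
    (if 0 < i then |f (i - 1) - f i| else 0) + (if i + 1 < n then |f (i + 1) - f i| else 0)
  have hrow (i : Fin n) : ∑ l, ‖M i l‖ = R i := by
    simp_rw [hM, or_comm (a := (i : ℕ) + 1 = _)]
    exact sum_fin_ite_adj i fun l => |f l - f i|
  have hR (i : ℕ) : R i ≤ edgeLen f i + edgeLen f (i + 1) := by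
    simp only [R, edgeLen, Nat.add_sub_cancel, abs_sub_comm (f (i - 1))]
    split_ifs <;> linarith [abs_nonneg (f i - f (i - 1)), abs_nonneg (f (i + 1) - f i)]
  refine opNorm_le_of_sum_norm_mul_rowSum_le M hC fun j => ?_
  simp_rw [hrow, hM, ite_mul, zero_mul]
  rw [sum_fin_ite_adj j fun i => |f j - f i| * R i]
  refine le_trans (add_le_add ?_ ?_) (h j j.isLt)
  · split_ifs with hj
    · have := hR (j - 1)
      rw [Nat.sub_add_cancel hj] at this
      exact mul_le_mul_of_nonneg_left this (abs_nonneg _)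
    · exact mul_nonneg (edgeLen_nonneg f _) (add_nonneg (edgeLen_nonneg f _) (edgeLen_nonneg f _))
  · split_ifs
    · rw [abs_sub_comm]
      exact mul_le_mul_of_nonneg_left (hR (j + 1)) (abs_nonneg _)
    · exact mul_nonneg (edgeLen_nonneg f _) (add_nonneg (edgeLen_nonneg f _) (edgeLen_nonneg f _))

-- witnesses for chains with an odd (`2k - 1`), resp. even (`2k`), number of edges
noncomputable def oddPotential (j : ℕ) : ℝ := ((j + 1) / 2 : ℕ)

noncomputable def evenPotential (k j : ℕ) : ℝ :=
  if Even j then (j / 2 : ℕ) * ((k : ℝ) + 1) else k * ((j / 2 : ℕ) + 1)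

lemma edgeLen_oddPotential (j : ℕ) : edgeLen oddPotential j = if Even j then 0 else 1 := by
  obtain ⟨m, rfl | rfl⟩ := Nat.even_or_odd' j
  · simp [edgeLen, oddPotential, show (2 * m + 1) / 2 = (2 * m - 1 + 1) / 2 by omega]
  · simp [edgeLen, oddPotential, parity_simps,
      show (2 * m + 1 + 1) / 2 = (2 * m + 1) / 2 + 1 by omega]

lemma oddPotential_column (j : ℕ) :
    edgeLen oddPotential j * (edgeLen oddPotential (j - 1) + edgeLen oddPotential j) +
      edgeLen oddPotential (j + 1) * (edgeLen oddPotential (j + 1) + edgeLen oddPotential (j + 2))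
      = 1 := by
  obtain ⟨m, rfl | rfl⟩ := Nat.even_or_odd' j <;>
    simp [edgeLen_oddPotential, parity_simps]

lemma evenPotential_two_mul (k m : ℕ) : evenPotential k (2 * m) = m * ((k : ℝ) + 1) := by
  simp [evenPotential]

lemma evenPotential_two_mul_add_one (k m : ℕ) :
    evenPotential k (2 * m + 1) = k * ((m : ℝ) + 1) := by
  simp [evenPotential, parity_simps, show (2 * m + 1) / 2 = m by omega]

lemma edgeLen_evenPotential_two_mul (k m : ℕ) : edgeLen (evenPotential k) (2 * m) = m := by
  rcases m with _ | m
  · simp [edgeLen]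
  · rw [edgeLen, show 2 * (m + 1) - 1 = 2 * m + 1 by omega, evenPotential_two_mul,
      evenPotential_two_mul_add_one]
    push_cast
    rw [abs_of_nonneg (by ring_nf; positivity)]
    ring

lemma edgeLen_evenPotential_two_mul_add_one (k m : ℕ) :
    edgeLen (evenPotential k) (2 * m + 1) = |(k : ℝ) - m| := by
  rw [edgeLen, Nat.add_sub_cancel, evenPotential_two_mul, evenPotential_two_mul_add_one]
  ring_nf

lemma evenPotential_column {k j : ℕ} (hj : j < 2 * k + 1) :
    edgeLen (evenPotential k) j *
        (edgeLen (evenPotential k) (j - 1) + edgeLen (evenPotential k) j) +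
      edgeLen (evenPotential k) (j + 1) *
        (edgeLen (evenPotential k) (j + 1) + edgeLen (evenPotential k) (j + 2))
      = k * ((k : ℝ) + 1) := by
  obtain ⟨m, rfl | rfl⟩ := Nat.even_or_odd' j
  · rcases m with _ | m
    · rw [show 2 * 0 + 2 = 2 * 1 from rfl, edgeLen_evenPotential_two_mul,
        edgeLen_evenPotential_two_mul, edgeLen_evenPotential_two_mul_add_one]
      simp
    · have hm : (m : ℝ) + 1 ≤ k := by exact_mod_cast (show m + 1 ≤ k by omega)
      rw [show 2 * (m + 1) - 1 = 2 * m + 1 by omega, show 2 * (m + 1) + 2 = 2 * (m + 2) by ring,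
        edgeLen_evenPotential_two_mul, edgeLen_evenPotential_two_mul,
        edgeLen_evenPotential_two_mul_add_one, edgeLen_evenPotential_two_mul_add_one,
        abs_of_nonneg (by linarith), abs_of_nonneg (by push_cast; linarith)]
      push_cast
      ring
  · have hm : (m : ℝ) + 1 ≤ k := by exact_mod_cast (show m + 1 ≤ k by omega)
    rw [Nat.add_sub_cancel, show 2 * m + 1 + 1 = 2 * (m + 1) by ring,
      show 2 * m + 1 + 2 = 2 * (m + 1) + 1 by ring, edgeLen_evenPotential_two_mul,
      edgeLen_evenPotential_two_mul, edgeLen_evenPotential_two_mul_add_one,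
      edgeLen_evenPotential_two_mul_add_one, abs_of_nonneg (by linarith),
      abs_of_nonneg (by push_cast; linarith)]
    push_cast
    ring

theorem stmt12 (w : ℝ) (hw : 0 < w) (k : ℕ) (hk : 1 ≤ k) :
    ncDist (chainD (2 * k + 1) fun _ => w) ⟨0, by omega⟩ ⟨2 * k, by omega⟩ =
      ENNReal.ofReal (w * Real.sqrt ((k : ℝ) * ((k : ℝ) + 1))) ∧
    ncDist (chainD (2 * k) fun _ => w) ⟨0, by omega⟩ ⟨2 * k - 1, by omega⟩ =
      ENNReal.ofReal (w * (k : ℝ)) := by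
  have hK : (0 : ℝ) < k * (k + 1) := by positivity
  constructor
  · apply le_antisymm
    · refine (ncDist_chainD_le (n := 2 * k + 1) hw _ _ rfl rfl).trans_eq ?_
      push_cast [show (2 * k + 1) / 2 = k by omega, show (2 * k + 1 + 1) / 2 = k + 1 by omega]
      rfl
    · have hC := opNorm_commD_chainD_le hw (evenPotential k) (Real.sqrt_nonneg _)
        fun j hj => (evenPotential_column hj).trans_le (Real.sq_sqrt hK.le).ge
      refine le_of_eq_of_le ?_ (ofReal_div_le_ncDist _ _ (Real.sqrt_pos.2 hK) hC _ _)
      have h0 : evenPotential k 0 = 0 := by simpa using evenPotential_two_mul k 0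
      rw [Fin.val_mk, Fin.val_mk, h0, evenPotential_two_mul, ← Complex.ofReal_sub,
        Complex.norm_real, Real.norm_eq_abs, mul_zero, zero_sub, abs_neg,
        abs_of_pos (by positivity), mul_div_assoc, Real.div_sqrt]
  · apply le_antisymm
    · refine (ncDist_chainD_le (n := 2 * k) hw _ _ rfl (by simp; omega)).trans_eq ?_
      rw [show 2 * k / 2 = k by omega, show (2 * k + 1) / 2 = k by omega,
        Real.sqrt_mul_self (Nat.cast_nonneg k)]
    · have hC := opNorm_commD_chainD_le (n := 2 * k) hw oddPotential zero_le_one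
        fun j _ => (oddPotential_column j).trans_le (one_pow 2).ge
      refine le_of_eq_of_le ?_ (ofReal_div_le_ncDist _ _ one_pos hC _ _)
      simp [oddPotential, show 2 * k - 1 + 1 = 2 * k by omega, abs_of_pos hw]
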